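/- arXiv:2512.21046 — 3 statements merged into one kernel-verified Lean document; each statement's English description precedes it below -/
import Mathlib

section
/- Let h : Ω → ℝ be a function on a finite set Ω, let c(x) = ε(α + h(x)) satisfy 0 ≤ c(x) ≤ π/4 with ε > 0, and let p be a probability mass function on Ω. Define p'(x) = p(x)·sin²(π/4 + c(x)) / Σ_y p(y)·sin²(π/4 + c(y)). Then Σ_x p'(x)h(x) ≥ Σ_x p(x)h(x). Moreover, if h is not constant on the support of p, the inequality is strict; if h is constant on the support of p, equality holds. -/
/-!
With `w x = sin² (π/4 + c x)` and `Z = ∑ p w > 0`, the tilted mean is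
`∑ p' h = ∑ p h + (∑ p w h - (∑ p h)(∑ p w)) / Z`, and twice the numerator is the symmetric sum
`∑ₓ ∑ᵧ p x p y (h x - h y)(w x - w y)` (weighted Chebyshev). As `c` is an increasing affine
function of `h` with values in `[0, π/4]` and `sin²` is strictly increasing on `[0, π/2]`, every
summand is nonnegative, and positive exactly when `p x p y ≠ 0` and `h x ≠ h y`.
-/

open Finset Real

section WeightedChebyshev

variable {ι : Type*} {p h w : ι → ℝ}

theorem sub_mul_sub_pos_of_ne (hw : ∀ i j, h i < h j → w i < w j) {i j : ι} (hij : h i ≠ h j) :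
    0 < (h i - h j) * (w i - w j) := by
  rcases hij.lt_or_gt with hlt | hgt
  · exact mul_pos_of_neg_of_neg (sub_neg.2 hlt) (sub_neg.2 (hw i j hlt))
  · exact mul_pos (sub_pos.2 hgt) (sub_pos.2 (hw j i hgt))

theorem sub_mul_sub_nonneg (hw : ∀ i j, h i < h j → w i < w j) (i j : ι) :
    0 ≤ (h i - h j) * (w i - w j) := by
  by_cases hij : h i = h j
  · simp [hij]
  · exact (sub_mul_sub_pos_of_ne hw hij).le

variable [Fintype ι]

theorem sum_sum_mul_mul_sub_mul_sub :
    ∑ i, ∑ j, p i * p j * ((h i - h j) * (w i - w j)) =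
      2 * ((∑ i, p i) * (∑ i, p i * w i * h i) - (∑ i, p i * h i) * ∑ i, p i * w i) := by
  -- Each summand is a product `f i * g j`, after swapping `i` and `j` in the first and last.
  have expand : ∀ i j, p i * p j * ((h i - h j) * (w i - w j)) =
      p j * (p i * w i * h i) + p i * (p j * w j * h j)
        - p i * h i * (p j * w j) - p j * h j * (p i * w i) := by
    intros; ring
  simp only [expand, sum_add_distrib, sum_sub_distrib]
  rw [sum_comm (f := fun i j => p j * (p i * w i * h i)),
    sum_comm (f := fun i j => p j * h j * (p i * w i)), ← sum_mul_sum, ← sum_mul_sum]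
  ring

theorem sum_mul_mul_sum_le (hp : ∀ i, 0 ≤ p i) (hw : ∀ i j, h i < h j → w i < w j) :
    (∑ i, p i * h i) * ∑ i, p i * w i ≤ (∑ i, p i) * ∑ i, p i * w i * h i := by
  have : 0 ≤ ∑ i, ∑ j, p i * p j * ((h i - h j) * (w i - w j)) :=
    sum_nonneg fun i _ => sum_nonneg fun j _ =>
      mul_nonneg (mul_nonneg (hp i) (hp j)) (sub_mul_sub_nonneg hw i j)
  rw [sum_sum_mul_mul_sub_mul_sub] at this
  linarith

theorem sum_mul_mul_sum_lt (hp : ∀ i, 0 ≤ p i) (hw : ∀ i j, h i < h j → w i < w j)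
    (hne : ∃ i j, p i ≠ 0 ∧ p j ≠ 0 ∧ h i ≠ h j) :
    (∑ i, p i * h i) * ∑ i, p i * w i < (∑ i, p i) * ∑ i, p i * w i * h i := by
  obtain ⟨i, j, hpi, hpj, hij⟩ := hne
  have hterm : ∀ k l, 0 ≤ p k * p l * ((h k - h l) * (w k - w l)) := fun k l =>
    mul_nonneg (mul_nonneg (hp k) (hp l)) (sub_mul_sub_nonneg hw k l)
  have : 0 < ∑ k, ∑ l, p k * p l * ((h k - h l) * (w k - w l)) :=
    sum_pos' (fun k _ => sum_nonneg fun l _ => hterm k l)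
      ⟨i, mem_univ i, sum_pos' (fun l _ => hterm i l) ⟨j, mem_univ j,
        mul_pos (mul_pos ((hp i).lt_of_ne' hpi) ((hp j).lt_of_ne' hpj))
          (sub_mul_sub_pos_of_ne hw hij)⟩⟩
  rw [sum_sum_mul_mul_sub_mul_sub] at this
  linarith

theorem sum_mul_mul_sum_eq (hconst : ∀ i j, p i ≠ 0 → p j ≠ 0 → h i = h j) :
    (∑ i, p i * h i) * ∑ i, p i * w i = (∑ i, p i) * ∑ i, p i * w i * h i := by
  have : ∑ i, ∑ j, p i * p j * ((h i - h j) * (w i - w j)) = 0 := by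
    refine sum_eq_zero fun i _ => sum_eq_zero fun j _ => ?_
    by_cases hpi : p i = 0
    · simp [hpi]
    by_cases hpj : p j = 0
    · simp [hpj]
    simp [hconst i j hpi hpj]
  rw [sum_sum_mul_mul_sub_mul_sub] at this
  linarith

theorem sum_mul_pos_of_sum_pos (hp : ∀ i, 0 ≤ p i) (hp_sum : 0 < ∑ i, p i)
    (hw : ∀ i, 0 < w i) : 0 < ∑ i, p i * w i := by
  obtain ⟨i, -, hpi⟩ := exists_ne_zero_of_sum_ne_zero hp_sum.ne'
  exact sum_pos' (fun j _ => mul_nonneg (hp j) (hw j).le)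
    ⟨i, mem_univ i, mul_pos ((hp i).lt_of_ne' hpi) (hw i)⟩

theorem sum_tilted_mul_eq (hp1 : ∑ i, p i = 1) (hZ : ∑ i, p i * w i ≠ 0) :
    ∑ i, p i * w i / (∑ j, p j * w j) * h i = ∑ i, p i * h i +
      ((∑ i, p i) * (∑ i, p i * w i * h i) - (∑ i, p i * h i) * ∑ i, p i * w i) /
        ∑ i, p i * w i := by
  simp only [div_mul_eq_mul_div, ← sum_div, hp1, one_mul]
  field_simp
  ring

end WeightedChebyshev

theorem sin_sq_strictMonoOn : StrictMonoOn (fun x => sin x ^ 2) (Set.Icc 0 (π / 2)) := by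
  intro x hx y hy hxy
  have hsin : sin x < sin y :=
    strictMonoOn_sin ⟨by linarith [hx.1, pi_pos], hx.2⟩ ⟨by linarith [hy.1, pi_pos], hy.2⟩ hxy
  have : 0 ≤ sin x := sin_nonneg_of_nonneg_of_le_pi hx.1 (by linarith [hx.2, pi_pos])
  dsimp only
  gcongr

theorem cost_expectation_improves {Ω : Type*} [Fintype Ω]
    (h : Ω → ℝ) (ε α : ℝ) (hε : 0 < ε)
    (c : Ω → ℝ) (hc_def : ∀ x, c x = ε * (α + h x))
    (hc : ∀ x, 0 ≤ c x ∧ c x ≤ π / 4)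
    (p : Ω → ℝ) (hp : ∀ x, 0 ≤ p x) (hp1 : ∑ x, p x = 1)
    (p' : Ω → ℝ)
    (hp' : ∀ x, p' x =
      p x * Real.sin (π / 4 + c x) ^ 2 / ∑ y, p y * Real.sin (π / 4 + c y) ^ 2) :
    (∑ x, p x * h x ≤ ∑ x, p' x * h x) ∧
    ((∃ x y, p x ≠ 0 ∧ p y ≠ 0 ∧ h x ≠ h y) →
      ∑ x, p x * h x < ∑ x, p' x * h x) ∧
    ((∀ x y, p x ≠ 0 → p y ≠ 0 → h x = h y) →
      ∑ x, p' x * h x = ∑ x, p x * h x) := by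
  set w : Ω → ℝ := fun x => sin (π / 4 + c x) ^ 2
  have hshift : ∀ x, π / 4 + c x ∈ Set.Icc 0 (π / 2) := fun x =>
    ⟨by linarith [(hc x).1, pi_pos], by linarith [(hc x).2]⟩
  have hw_pos : ∀ x, 0 < w x := fun x =>
    pow_pos (sin_pos_of_pos_of_lt_pi (by linarith [(hc x).1, pi_pos])
      (by linarith [(hc x).2, pi_pos])) 2
  have hw_mono : ∀ x y, h x < h y → w x < w y := fun x y hxy =>
    sin_sq_strictMonoOn (hshift x) (hshift y) (by rw [hc_def, hc_def]; gcongr)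
  have hZ : 0 < ∑ x, p x * w x := sum_mul_pos_of_sum_pos hp (hp1 ▸ one_pos) hw_pos
  have hmean : ∑ x, p' x * h x = ∑ x, p x * h x +
      ((∑ x, p x) * (∑ x, p x * w x * h x) - (∑ x, p x * h x) * ∑ x, p x * w x) /
        ∑ x, p x * w x := by
    rw [← sum_tilted_mul_eq hp1 hZ.ne']
    exact sum_congr rfl fun x _ => by rw [hp']
  rw [hmean]
  refine ⟨le_add_of_nonneg_right (div_nonneg ?_ hZ.le), fun hne => lt_add_of_pos_right _
    (div_pos ?_ hZ), fun hconst => by rw [sum_mul_mul_sum_eq hconst, sub_self, zero_div, add_zero]⟩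
  · exact sub_nonneg.2 (sum_mul_mul_sum_le hp hw_mono)
  · exact sub_pos.2 (sum_mul_mul_sum_lt hp hw_mono hne)
end

section
/- Let h : Ω → ℝ and p a probability mass function on a finite set Ω, and suppose ω := Σ_x p(x)·sin(2c(x)) > −1 where c(x) = ε(α + h(x)). Then the post-success expectation satisfies ⟨h⟩_{p'} − ⟨h⟩_p = (⟨h·sin(2c)⟩_p − ⟨h⟩_p·⟨sin(2c)⟩_p) / (1 + ω), where p'(x) ∝ p(x)·sin²(π/4 + c(x)). -/
/-!
Reweighting `p` by `w` shifts the mean of `h` by `Cov_p(h, w) / ⟨w⟩_p`. For the success weight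
`w = sin²(π/4 + c) = (1 + sin 2c) / 2` the constant part of `w` drops out of the covariance and
`⟨w⟩_p = (1 + ω) / 2`, so the two factors `1/2` cancel.
-/

open Real Finset

theorem Real.sin_sq_pi_div_four_add (t : ℝ) : sin (π / 4 + t) ^ 2 = (1 + sin (2 * t)) / 2 := by
  rw [sin_sq_eq_half_sub, show 2 * (π / 4 + t) = 2 * t + π / 2 by ring, cos_add_pi_div_two]
  ring

theorem Finset.sum_reweight_mul_sub_sum_mul {ι : Type*} (s : Finset ι) (p w f : ι → ℝ)
    (hW : ∑ i ∈ s, p i * w i ≠ 0) :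
    ∑ i ∈ s, p i * w i / (∑ j ∈ s, p j * w j) * f i - ∑ i ∈ s, p i * f i =
      (∑ i ∈ s, p i * (f i * w i) - (∑ i ∈ s, p i * f i) * ∑ i ∈ s, p i * w i) /
        ∑ i ∈ s, p i * w i := by
  have hterm : ∀ i ∈ s, p i * w i / (∑ j ∈ s, p j * w j) * f i * ∑ j ∈ s, p j * w j =
      p i * (f i * w i) := fun i _ => by field_simp
  rw [eq_div_iff hW, sub_mul, sum_mul, sum_congr rfl hterm]

theorem cost_change_formula_general {Ω : Type*} [Fintype Ω]
    (h : Ω → ℝ)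
    (c : Ω → ℝ)
    (p : Ω → ℝ) (hp1 : ∑ x, p x = 1)
    (ω : ℝ) (hω_def : ω = ∑ x, p x * Real.sin (2 * c x)) (hω : -1 < ω)
    (p' : Ω → ℝ)
    (hp' : ∀ x, p' x =
      p x * Real.sin (π / 4 + c x) ^ 2 / ∑ y, p y * Real.sin (π / 4 + c y) ^ 2) :
    (∑ x, p' x * h x) - (∑ x, p x * h x) =
      ((∑ x, p x * (h x * Real.sin (2 * c x))) -
        (∑ x, p x * h x) * (∑ x, p x * Real.sin (2 * c x))) / (1 + ω) := by
  have hmean : ∑ x, p x * ((1 + sin (2 * c x)) / 2) = (1 + ω) / 2 := by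
    simp only [mul_div_assoc', mul_add, mul_one, sum_add_distrib, ← sum_div, hp1, hω_def]
  have hcov : ∑ x, p x * (h x * ((1 + sin (2 * c x)) / 2)) - (∑ x, p x * h x) * ((1 + ω) / 2) =
      (∑ x, p x * (h x * sin (2 * c x)) - (∑ x, p x * h x) * ω) / 2 := by
    simp only [mul_div_assoc', mul_add, mul_one, sum_add_distrib, ← sum_div]
    ring
  simp only [hp', sin_sq_pi_div_four_add]
  rw [sum_reweight_mul_sub_sum_mul _ _ _ _ (by linarith), hmean, hcov, ← hω_def]
  field_simp

theorem cost_change_formula {Ω : Type*} [Fintype Ω]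
    (h : Ω → ℝ) (ε α : ℝ)
    (c : Ω → ℝ) (hc_def : ∀ x, c x = ε * (α + h x))
    (p : Ω → ℝ) (hp : ∀ x, 0 ≤ p x) (hp1 : ∑ x, p x = 1)
    (ω : ℝ) (hω_def : ω = ∑ x, p x * Real.sin (2 * c x)) (hω : -1 < ω)
    (p' : Ω → ℝ)
    (hp' : ∀ x, p' x =
      p x * Real.sin (π / 4 + c x) ^ 2 / ∑ y, p y * Real.sin (π / 4 + c y) ^ 2) :
    (∑ x, p' x * h x) - (∑ x, p x * h x) =
      ((∑ x, p x * (h x * Real.sin (2 * c x))) -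
        (∑ x, p x * h x) * (∑ x, p x * Real.sin (2 * c x))) / (1 + ω) :=
  cost_change_formula_general h c p hp1 ω hω_def hω p' hp'
end

section
/- Let Xᵢ be independent ±1-valued random variables with P(Xᵢ = 1) = pᵢ ≥ p > 1/2, and let Sₙ = Σ_{i≤n} Xᵢ. Let τ be the first hitting time of level L ≥ 1. Then E[τ] ≤ L / (2p − 1). -/
open MeasureTheory ProbabilityTheory Finset
open scoped ENNReal

/-!
Let `A i = notHitSet X L i` be the event that the walk has not visited `L` at any time `m ≤ i`.
Before `τ` the walk has not visited `L`, so `τ ≤ ∑ i, 1_{A i}` and `E τ ≤ ∑ i, P (A i)`. The event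
`A i` is a function of `X 0, …, X (i - 1)`, hence independent of `X i`, so
`E [1_{A i} X i] = P (A i) (2 P (X i = 1) - 1) ≥ (2p - 1) P (A i)`.
On the other hand `∑_{i<n} 1_{A i} X i` is the walk stopped on reaching `L`: it starts at `0 ≤ L`
and climbs by at most one per step, so it never exceeds `L`. Taking expectations,
`(2p - 1) ∑_{i<n} P (A i) ≤ L` for every `n`.
-/

def NotHitBy (x : ℕ → ℤ) (L : ℤ) (i : ℕ) : Prop :=
  ∀ m ≤ i, ∑ j ∈ range m, x j ≠ L

namespace NotHitBy

variable {x y : ℕ → ℤ} {L : ℤ} {i n : ℕ}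

lemma mono (h : NotHitBy x L i) {j : ℕ} (hji : j ≤ i) : NotHitBy x L j :=
  fun m hm => h m (hm.trans hji)

lemma congr (hxy : ∀ j < i, x j = y j) : NotHitBy x L i ↔ NotHitBy y L i := by
  refine forall₂_congr fun m hm => ?_
  rw [sum_congr rfl fun j hj => hxy j ((mem_range.1 hj).trans_le hm)]

lemma of_lt_sInf (hi : i < sInf {n | ∑ j ∈ range n, x j = L}) : NotHitBy x L i :=
  fun _ hm => Nat.notMem_of_lt_sInf (hm.trans_lt hi)

lemma sum_lt (hx : ∀ j, x j ≤ 1) (hL : 0 ≤ L) (h : NotHitBy x L n) :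
    ∑ j ∈ range n, x j < L := by
  induction n with
  | zero => simpa using hL.lt_of_ne (by simpa using h 0 le_rfl)
  | succ n ih =>
    have hlt := ih (h.mono n.le_succ)
    have hne := h (n + 1) le_rfl
    rw [sum_range_succ] at hne ⊢
    have := hx n
    omega

end NotHitBy

lemma sum_indicator_notHitBy_le {x : ℕ → ℤ} {L : ℤ} (hx : ∀ j, x j ≤ 1) (hL : 0 ≤ L) (n : ℕ) :
    ∑ i ∈ range n, {i | NotHitBy x L i}.indicator x i ≤ L := by
  induction n with
  | zero => simpa using hL
  | succ n ih =>
    rw [sum_range_succ]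
    by_cases hn : NotHitBy x L n
    · have hstopped : ∑ i ∈ range n, {i | NotHitBy x L i}.indicator x i = ∑ i ∈ range n, x i :=
        sum_congr rfl fun i hi => Set.indicator_of_mem (hn.mono (mem_range.1 hi).le) x
      rw [hstopped, Set.indicator_of_mem hn]
      have := hn.sum_lt hx hL
      have := hx n
      omega
    · rwa [Set.indicator_of_notMem (s := {i | NotHitBy x L i}) hn, add_zero]

lemma natCast_sInf_le_tsum_indicator_notHitBy (x : ℕ → ℤ) (L : ℤ) :
    ((sInf {n | ∑ j ∈ range n, x j = L} : ℕ) : ℝ≥0∞) ≤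
      ∑' i, {i | NotHitBy x L i}.indicator 1 i :=
  calc ((sInf {n | ∑ j ∈ range n, x j = L} : ℕ) : ℝ≥0∞)
      = ∑ i ∈ range (sInf {n | ∑ j ∈ range n, x j = L}), {i | NotHitBy x L i}.indicator 1 i := by
        rw [sum_congr rfl fun i hi => Set.indicator_of_mem (NotHitBy.of_lt_sInf (mem_range.1 hi)) 1]
        simp
    _ ≤ _ := ENNReal.sum_le_tsum _

section Probability

variable {Ω : Type*} {X : ℕ → Ω → ℤ}

def notHitSet (X : ℕ → Ω → ℤ) (L : ℤ) (i : ℕ) : Set Ω :=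
  {ω | NotHitBy (X · ω) L i}

lemma notHitSet_eq_preimage (L : ℤ) (i : ℕ) :
    notHitSet X L i = (fun ω (j : range i) => X j ω) ⁻¹'
      {v | NotHitBy (fun j => if h : j ∈ range i then v ⟨j, h⟩ else 0) L i} := by
  ext ω
  exact NotHitBy.congr fun j hj => by simp [hj]

variable [MeasurableSpace Ω] {μ : Measure Ω}

lemma integral_intCast_eq_two_mul_measureReal_sub_one [IsProbabilityMeasure μ] {Y : Ω → ℤ}
    (hY : Measurable Y) (hval : ∀ ω, Y ω = 1 ∨ Y ω = -1) :
    ∫ ω, (Y ω : ℝ) ∂μ = 2 * μ.real {ω | Y ω = 1} - 1 := by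
  have hs : MeasurableSet {ω | Y ω = 1} := hY (measurableSet_singleton 1)
  have hpt : (fun ω => (Y ω : ℝ)) = fun ω => 2 * {ω | Y ω = 1}.indicator 1 ω - 1 := by
    funext ω
    rcases hval ω with h | h <;> norm_num [h]
  rw [hpt, integral_sub (((integrable_const 1).indicator hs).const_mul 2) (integrable_const 1),
    integral_const_mul, integral_indicator_one hs]
  simp

lemma integrable_intCast_of_pm_one [IsFiniteMeasure μ] {Y : Ω → ℤ} (hY : Measurable Y)
    (hval : ∀ ω, Y ω = 1 ∨ Y ω = -1) : Integrable (fun ω => (Y ω : ℝ)) μ :=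
  .of_bound ((measurable_of_countable _).comp hY).aestronglyMeasurable 1 <| ae_of_all _ fun ω => by
    rcases hval ω with h | h <;> simp [h]

lemma measurableSet_notHitSet (hmeas : ∀ i, Measurable (X i)) (L : ℤ) (i : ℕ) :
    MeasurableSet (notHitSet X L i) := by
  rw [notHitSet_eq_preimage]
  exact (measurable_pi_lambda (fun ω (j : range i) => X j ω) fun j => hmeas j) .of_discrete

lemma indepFun_indicator_notHitSet (hmeas : ∀ i, Measurable (X i)) (hindep : iIndepFun X μ)
    (L : ℤ) (i : ℕ) :
    IndepFun ((notHitSet X L i).indicator (1 : Ω → ℝ)) (fun ω => (X i ω : ℝ)) μ := by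
  rw [notHitSet_eq_preimage]
  exact (hindep.indepFun_finset (range i) {i} (by simp) hmeas).comp
    (φ := Set.indicator _ (1 : (range i → ℤ) → ℝ)) (ψ := fun v => (v ⟨i, mem_singleton_self i⟩ : ℝ))
    (measurable_of_countable _) (measurable_of_countable _)

lemma integrable_indicator_notHitSet_mul [IsFiniteMeasure μ] (hmeas : ∀ i, Measurable (X i))
    (hval : ∀ i ω, X i ω = 1 ∨ X i ω = -1) (L : ℤ) (i : ℕ) :
    Integrable (fun ω => (notHitSet X L i).indicator 1 ω * (X i ω : ℝ)) μ :=
  (integrable_intCast_of_pm_one (hmeas i) (hval i)).bdd_mul (c := 1)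
    (measurable_one.indicator (measurableSet_notHitSet hmeas L i)).aestronglyMeasurable
    (ae_of_all _ fun ω => by by_cases h : ω ∈ notHitSet X L i <;> simp [h])

lemma mul_measureReal_le_integral_indicator_notHitSet_mul [IsProbabilityMeasure μ]
    (hmeas : ∀ i, Measurable (X i)) (hval : ∀ i ω, X i ω = 1 ∨ X i ω = -1)
    (hindep : iIndepFun X μ) {p : ℝ}
    (hplus : ∀ i, ENNReal.ofReal p ≤ μ {ω | X i ω = 1}) (L : ℤ) (i : ℕ) :
    (2 * p - 1) * μ.real (notHitSet X L i) ≤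
      ∫ ω, (notHitSet X L i).indicator 1 ω * (X i ω : ℝ) ∂μ := by
  have hp : p ≤ μ.real {ω | X i ω = 1} :=
    (ENNReal.ofReal_le_iff_le_toReal (measure_ne_top _ _)).1 (hplus i)
  rw [(indepFun_indicator_notHitSet hmeas hindep L i).integral_fun_mul_eq_mul_integral
    (measurable_one.indicator (measurableSet_notHitSet hmeas L i)).aestronglyMeasurable
    (integrable_intCast_of_pm_one (hmeas i) (hval i)).aestronglyMeasurable,
    integral_indicator_one (measurableSet_notHitSet hmeas L i),
    integral_intCast_eq_two_mul_measureReal_sub_one (hmeas i) (hval i), mul_comm]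
  gcongr

lemma mul_sum_measureReal_notHitSet_le [IsProbabilityMeasure μ]
    (hmeas : ∀ i, Measurable (X i)) (hval : ∀ i ω, X i ω = 1 ∨ X i ω = -1)
    (hindep : iIndepFun X μ) {p : ℝ} (hplus : ∀ i, ENNReal.ofReal p ≤ μ {ω | X i ω = 1})
    {L : ℤ} (hL : 0 ≤ L) (n : ℕ) :
    (2 * p - 1) * ∑ i ∈ range n, μ.real (notHitSet X L i) ≤ L := by
  have hstopped (ω : Ω) :
      ∑ i ∈ range n, (notHitSet X L i).indicator 1 ω * (X i ω : ℝ) ≤ L := by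
    have hx : ∀ j, X j ω ≤ 1 := fun j => by rcases hval j ω with h | h <;> simp [h]
    have hcast : ∑ i ∈ range n, (notHitSet X L i).indicator 1 ω * (X i ω : ℝ) =
        ((∑ i ∈ range n, {i | NotHitBy (X · ω) L i}.indicator (X · ω) i : ℤ) : ℝ) := by
      push_cast
      refine sum_congr rfl fun i _ => ?_
      by_cases h : NotHitBy (X · ω) L i <;> simp [notHitSet, h]
    exact hcast ▸ mod_cast sum_indicator_notHitBy_le hx hL n
  calc (2 * p - 1) * ∑ i ∈ range n, μ.real (notHitSet X L i)
      = ∑ i ∈ range n, (2 * p - 1) * μ.real (notHitSet X L i) := mul_sum _ _ _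
    _ ≤ ∑ i ∈ range n, ∫ ω, (notHitSet X L i).indicator 1 ω * (X i ω : ℝ) ∂μ :=
        sum_le_sum fun i _ =>
          mul_measureReal_le_integral_indicator_notHitSet_mul hmeas hval hindep hplus L i
    _ = ∫ ω, ∑ i ∈ range n, (notHitSet X L i).indicator 1 ω * (X i ω : ℝ) ∂μ :=
        (integral_finsetSum _ fun i _ => integrable_indicator_notHitSet_mul hmeas hval L i).symm
    _ ≤ ∫ _, (L : ℝ) ∂μ := integral_mono
        (integrable_finsetSum _ fun i _ => integrable_indicator_notHitSet_mul hmeas hval L i)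
        (integrable_const _) hstopped
    _ = L := by simp

lemma tsum_measure_notHitSet_le [IsProbabilityMeasure μ]
    (hmeas : ∀ i, Measurable (X i)) (hval : ∀ i ω, X i ω = 1 ∨ X i ω = -1)
    (hindep : iIndepFun X μ) {p : ℝ} (hp : 1 / 2 < p)
    (hplus : ∀ i, ENNReal.ofReal p ≤ μ {ω | X i ω = 1}) {L : ℤ} (hL : 0 ≤ L) :
    ∑' i, μ (notHitSet X L i) ≤ ENNReal.ofReal (L / (2 * p - 1)) := by
  refine ENNReal.tsum_le_of_sum_range_le fun n => ?_
  rw [sum_congr rfl fun i _ => (ofReal_measureReal).symm,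
    ← ENNReal.ofReal_sum_of_nonneg fun _ _ => measureReal_nonneg]
  refine ENNReal.ofReal_le_ofReal ((le_div_iff₀ (by linarith)).2 ?_)
  simpa [mul_comm] using mul_sum_measureReal_notHitSet_le hmeas hval hindep hplus hL n

lemma lintegral_sInf_le_tsum_measure_notHitSet (hmeas : ∀ i, Measurable (X i)) (L : ℤ) :
    ∫⁻ ω, (sInf {n | ∑ j ∈ range n, X j ω = L} : ℕ) ∂μ ≤
      ∑' i, μ (notHitSet X L i) :=
  calc ∫⁻ ω, (sInf {n | ∑ j ∈ range n, X j ω = L} : ℕ) ∂μ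
      ≤ ∫⁻ ω, ∑' i, (notHitSet X L i).indicator 1 ω ∂μ := lintegral_mono fun ω =>
        natCast_sInf_le_tsum_indicator_notHitBy (X · ω) L
    _ = ∑' i, μ (notHitSet X L i) := by
        rw [lintegral_tsum fun i =>
          (measurable_one.indicator (measurableSet_notHitSet hmeas L i)).aemeasurable]
        simp_rw [lintegral_indicator_one (measurableSet_notHitSet hmeas L _)]

end Probability

theorem expected_hitting_time_bound_general
    {Ω : Type*} [MeasurableSpace Ω] (μ : Measure Ω) [IsProbabilityMeasure μ]
    (p : ℝ) (hp : 1 / 2 < p)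
    (L : ℕ)
    (X : ℕ → Ω → ℤ)
    (hmeas : ∀ i, Measurable (X i))
    (hval : ∀ i ω, X i ω = 1 ∨ X i ω = -1)
    (hindep : iIndepFun X μ)
    (hplus : ∀ i, ENNReal.ofReal p ≤ μ {ω | X i ω = 1})
    (τ : Ω → ℕ)
    (hτ : ∀ ω, τ ω = sInf {n : ℕ | (∑ i ∈ Finset.range n, X i ω) = (L : ℤ)}) :
    ∫ ω, (τ ω : ℝ) ∂μ ≤ (L : ℝ) / (2 * p - 1) := by
  have hbound : 0 ≤ (L : ℝ) / (2 * p - 1) := div_nonneg L.cast_nonneg (by linarith)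
  have hlintegral : ∫⁻ ω, (τ ω : ℝ≥0∞) ∂μ ≤ ENNReal.ofReal (L / (2 * p - 1)) := by
    simp_rw [hτ]
    simpa using (lintegral_sInf_le_tsum_measure_notHitSet hmeas (L : ℤ)).trans
      (tsum_measure_notHitSet_le hmeas hval hindep hp hplus L.cast_nonneg)
  -- No measurability of `τ` is needed: when `τ` is not integrable its Bochner integral is `0`.
  by_cases hint : Integrable (fun ω => (τ ω : ℝ)) μ
  · rw [integral_eq_lintegral_of_nonneg_ae (ae_of_all _ fun ω => (τ ω).cast_nonneg)
      hint.aestronglyMeasurable]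
    exact ENNReal.toReal_le_of_le_ofReal hbound (by simpa using hlintegral)
  · rw [integral_undef hint]
    exact hbound

theorem expected_hitting_time_bound
    {Ω : Type*} [MeasurableSpace Ω] (μ : Measure Ω) [IsProbabilityMeasure μ]
    (p : ℝ) (hp : 1 / 2 < p)
    (L : ℕ) (hL : 1 ≤ L)
    (X : ℕ → Ω → ℤ)
    (hmeas : ∀ i, Measurable (X i))
    (hval : ∀ i ω, X i ω = 1 ∨ X i ω = -1)
    (hindep : iIndepFun X μ)
    (hplus : ∀ i, ENNReal.ofReal p ≤ μ {ω | X i ω = 1})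
    (τ : Ω → ℕ)
    (hτ : ∀ ω, τ ω = sInf {n : ℕ | (∑ i ∈ Finset.range n, X i ω) = (L : ℤ)}) :
    ∫ ω, (τ ω : ℝ) ∂μ ≤ (L : ℝ) / (2 * p - 1) :=
  expected_hitting_time_bound_general μ p hp L X hmeas hval hindep hplus τ hτ
end
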